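/- arXiv:2012.15135 — 2 statements merged into one kernel-verified Lean document; each statement's English description precedes it below -/
import Mathlib

section
/- Let β be a Pisot number with 1 < β < 2. Then ℚ(β) = Per_{{−1,0,1}}(β): every x ∈ ℚ(β) admits an eventually periodic (β, {−1,0,1})-representation x = Σ_{k≥−L} a_k β^{−k} with digits a_k ∈ {−1,0,1}, and conversely every complex number admitting such a representation lies in ℚ(β). -/
/-!
The greedy `β`-expansion of `y ∈ [0, 1)` is read off the orbit of `y` under the
`β`-transformation `T z = fract (β z)`: its digits `⌊β Tᵏ y⌋` lie in `{0, 1}` when `β < 2`, and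
the expansion is eventually periodic as soon as the orbit repeats a point. For `y ∈ ℚ(β)` the
orbit is finite by Schmidt's argument: for a denominator `q` of `y`, the numbers `q Tⁿ y` are
algebraic integers of `ℚ(β)` with `q Tⁿ⁺¹ y = β · q Tⁿ y - q dₙ`. The real embedding keeps them
in `[0, |q|)`, and every other embedding sends `β` into the open unit disc, where the recurrence
is contracting; so all their conjugates are bounded and only finitely many values occur.
Scaling by a power of `β` and a sign reaches every element of `ℚ(β)`. Conversely, an eventually
periodic series is a finite sum plus a geometric series, hence lies in `ℚ(β)`.
-/

open Finset IntermediateField Filter Topology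

theorem tsum_mem_of_eventually_mul {𝕜 : Type*} [NormedField 𝕜] (F : Subfield 𝕜) {f : ℕ → 𝕜}
    {ξ : 𝕜} {N p : ℕ} (hf : ∀ k, f k ∈ F) (hξ : ξ ∈ F) (hξ1 : ξ ≠ 1)
    (hper : ∀ k, N ≤ k → f (k + p) = ξ * f k) : ∑' k, f k ∈ F := by
  by_cases hsum : Summable f
  swap
  · rw [tsum_eq_zero_of_not_summable hsum]; exact zero_mem F
  set g : ℕ → 𝕜 := fun k => f (k + N)
  have hg : Summable g := (summable_nat_add_iff N).2 hsum
  have hS : ∑' k, g k = ∑ i ∈ range p, g i + ξ * ∑' k, g k := by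
    rw [← tsum_mul_left, ← hg.sum_add_tsum_nat_add p]
    congr 1
    refine tsum_congr fun k => ?_
    simp only [g]
    rw [add_right_comm, hper _ (by omega)]
  have hS' : ∑' k, g k = (∑ i ∈ range p, g i) / (1 - ξ) := by
    rw [eq_div_iff (sub_ne_zero.2 hξ1.symm)]
    linear_combination hS
  rw [← hsum.sum_add_tsum_nat_add N, hS']
  exact add_mem (sum_mem fun k _ => hf k)
    (div_mem (sum_mem fun i _ => hf _) (sub_mem (one_mem F) hξ))

theorem norm_le_max_of_contracting_recurrence {R : Type*} [SeminormedRing R] {w : R}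
    (hw : ‖w‖ < 1) {x c : ℕ → R} {M : ℝ} (hc : ∀ n, ‖c n‖ ≤ M)
    (hx : ∀ n, x (n + 1) = w * x n - c n) (n : ℕ) :
    ‖x n‖ ≤ max ‖x 0‖ (M / (1 - ‖w‖)) := by
  set C := max ‖x 0‖ (M / (1 - ‖w‖))
  have hM : M ≤ (1 - ‖w‖) * C := by
    rw [← div_le_iff₀' (by linarith)]; exact le_max_right _ _
  induction n with
  | zero => exact le_max_left _ _
  | succ n ih =>
    calc ‖x (n + 1)‖ ≤ ‖w‖ * ‖x n‖ + ‖c n‖ := by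
          rw [hx]; exact (norm_sub_le _ _).trans (add_le_add_left (norm_mul_le _ _) _)
      _ ≤ ‖w‖ * C + (1 - ‖w‖) * C := by gcongr; exact (hc n).trans hM
      _ = C := by ring

theorem NumberField.finite_range_of_isIntegral_of_bounded {K ι : Type*} [Field K]
    [NumberField K] (z : ι → K) (hz : ∀ i, IsIntegral ℤ (z i))
    (hbdd : ∀ φ : K →+* ℂ, ∃ C, ∀ i, ‖φ (z i)‖ ≤ C) : (Set.range z).Finite := by
  choose C hC using hbdd
  obtain ⟨B, hB⟩ := Finite.exists_le C
  refine (NumberField.Embeddings.finite_of_norm_le K ℂ B).subset ?_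
  rintro _ ⟨i, rfl⟩
  exact ⟨hz i, fun φ => (hC φ i).trans (hB φ)⟩

theorem NumberField.finite_range_of_pisot_recurrence {K : Type*} [Field K] [NumberField K]
    {γ : K} (hγ : IsIntegral ℤ γ) (ι : K →+* ℂ) (hconj : ∀ φ : K →+* ℂ, φ ≠ ι → ‖φ γ‖ < 1)
    {z : ℕ → K} {c : ℕ → ℤ} {M C : ℝ} (hc : ∀ n, |(c n : ℝ)| ≤ M) (hz0 : IsIntegral ℤ (z 0))
    (hrec : ∀ n, z (n + 1) = γ * z n - c n) (hι : ∀ n, ‖ι (z n)‖ ≤ C) :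
    (Set.range z).Finite := by
  have hint : ∀ n, IsIntegral ℤ (z n) := by
    intro n
    induction n with
    | zero => exact hz0
    | succ n ih => rw [hrec]; exact (hγ.mul ih).sub (isIntegral_intCast _)
  refine finite_range_of_isIntegral_of_bounded z hint fun φ => ?_
  by_cases hφ : φ = ι
  · exact ⟨C, hφ ▸ hι⟩
  · exact ⟨_, norm_le_max_of_contracting_recurrence (hconj φ hφ) (c := fun n => (c n : ℂ))
      (fun n => by simpa [Complex.norm_intCast] using hc n) (fun n => by simp [hrec])⟩

theorem exists_eq_ofReal_of_mem_closure {β : ℝ} {x : ℂ}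
    (hx : x ∈ Subfield.closure {(β : ℂ)}) : ∃ y ∈ ℚ⟮β⟯, x = y := by
  have hle : Subfield.closure {(β : ℂ)} ≤ ℚ⟮β⟯.toSubfield.map Complex.ofRealHom :=
    Subfield.closure_le.2 (Set.singleton_subset_iff.2 ⟨β, mem_adjoin_simple_self ℚ β, rfl⟩)
  obtain ⟨y, hy, rfl⟩ := hle hx
  exact ⟨y, hy, rfl⟩

/-- An embedding fixing `β` is the real embedding, so any other one is a conjugate of `β`
different from `β`. -/
theorem norm_embedding_gen_lt_one {β : ℝ}
    (hpisot : ∀ z : ℂ, Polynomial.aeval z (minpoly ℚ β) = 0 → z ≠ (β : ℂ) → ‖z‖ < 1)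
    (φ : ℚ⟮β⟯ →+* ℂ) (hφ : φ ≠ Complex.ofRealHom.comp (algebraMap ℚ⟮β⟯ ℝ)) :
    ‖φ (AdjoinSimple.gen ℚ β)‖ < 1 := by
  set φ' : ℚ⟮β⟯ →ₐ[ℚ] ℂ := φ.toRatAlgHom
  refine hpisot (φ' (AdjoinSimple.gen ℚ β)) ?_ fun h => hφ ?_
  · have h0 : Polynomial.aeval (φ' (AdjoinSimple.gen ℚ β))
        (minpoly ℚ (AdjoinSimple.gen ℚ β)) = 0 := by
      rw [Polynomial.aeval_algHom_apply, minpoly.aeval, map_zero]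
    -- `minpoly_gen` is stated for a different (defeq) `ℚ`-algebra instance on `ℚ⟮β⟯`
    convert h0 using 2; exact (minpoly_gen ℚ β).symm
  · have := adjoin_algHom_ext ℚ (φ₁ := φ')
      (φ₂ := (Complex.ofRealHom.comp (algebraMap ℚ⟮β⟯ ℝ)).toRatAlgHom) fun _ hx => by
        obtain rfl := Set.mem_singleton_iff.1 hx; exact h
    exact RingHom.ext fun x => AlgHom.congr_fun this x

theorem Function.iterate_add_sub_eq_of_iterate_eq {α : Type*} {f : α → α} {x : α} {m n k : ℕ}
    (hmn : m ≤ n) (h : f^[m] x = f^[n] x) (hk : m ≤ k) : f^[k + (n - m)] x = f^[k] x := by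
  obtain ⟨j, rfl⟩ := Nat.exists_eq_add_of_le hk
  rw [show m + j + (n - m) = j + n by omega, iterate_add_apply, ← h, ← iterate_add_apply,
    add_comm]

section BetaTransformation

noncomputable def betaMap (β z : ℝ) : ℝ := Int.fract (β * z)

noncomputable def betaDigit (β z : ℝ) : ℤ := ⌊β * z⌋

variable {β : ℝ}

theorem betaMap_eq (β z : ℝ) : betaMap β z = β * z - betaDigit β z := rfl

theorem iterate_betaMap_mem_Ico {y : ℝ} (hy : y ∈ Set.Ico 0 1) (n : ℕ) :
    (betaMap β)^[n] y ∈ Set.Ico 0 1 := by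
  cases n with
  | zero => exact hy
  | succ n =>
    rw [Function.iterate_succ_apply']
    exact ⟨Int.fract_nonneg _, Int.fract_lt_one _⟩

theorem iterate_betaMap_mem {S : Subfield ℝ} (hβ : β ∈ S) {y : ℝ} (hy : y ∈ S) (n : ℕ) :
    (betaMap β)^[n] y ∈ S := by
  induction n with
  | zero => exact hy
  | succ n ih =>
    rw [Function.iterate_succ_apply', betaMap_eq]
    exact sub_mem (mul_mem hβ ih) (intCast_mem _ _)

theorem betaDigit_nonneg (hβ : 0 ≤ β) {z : ℝ} (hz : 0 ≤ z) : 0 ≤ betaDigit β z :=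
  Int.floor_nonneg.2 (mul_nonneg hβ hz)

theorem betaDigit_le (hβ : 0 ≤ β) {z : ℝ} (hz : z ≤ 1) : (betaDigit β z : ℝ) ≤ β :=
  (Int.floor_le _).trans (mul_le_of_le_one_right hβ hz)

theorem betaDigit_eq_zero_or_one (hβ0 : 0 ≤ β) (hβ2 : β < 2) {z : ℝ} (hz : z ∈ Set.Ico 0 1) :
    betaDigit β z = 0 ∨ betaDigit β z = 1 := by
  have h0 := betaDigit_nonneg hβ0 hz.1
  have h2 : betaDigit β z < 2 := by
    exact_mod_cast (betaDigit_le hβ0 hz.2.le).trans_lt hβ2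
  omega

theorem hasSum_betaDigit_iterate (hβ : 1 < β) {y : ℝ} (hy : y ∈ Set.Ico 0 1) :
    HasSum (fun k : ℕ => (betaDigit β ((betaMap β)^[k] y) : ℝ) * β ^ (-(k : ℤ) - 1)) y := by
  have hβ0 : 0 < β := by linarith
  have hu := iterate_betaMap_mem_Ico (β := β) hy
  have hpartial : ∀ n : ℕ,
      ∑ k ∈ range n, (betaDigit β ((betaMap β)^[k] y) : ℝ) * β ^ (-(k : ℤ) - 1)
        = y - (betaMap β)^[n] y * β ^ (-(n : ℤ)) := by
    intro n
    induction n with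
    | zero => simp
    | succ n ih =>
      rw [sum_range_succ, ih, Function.iterate_succ_apply', betaMap_eq, Nat.cast_succ, neg_add,
        zpow_add₀ hβ0.ne', zpow_sub_one₀ hβ0.ne']
      field_simp
      ring
  have hterm_nonneg : ∀ k : ℕ, 0 ≤ (betaDigit β ((betaMap β)^[k] y) : ℝ) * β ^ (-(k : ℤ) - 1) :=
    fun k => mul_nonneg (by exact_mod_cast betaDigit_nonneg hβ0.le (hu k).1)
      (zpow_nonneg hβ0.le _)
  have htail : Tendsto (fun n : ℕ => (betaMap β)^[n] y * β ^ (-(n : ℤ))) atTop (𝓝 0) := by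
    refine squeeze_zero (fun n => mul_nonneg (hu n).1 (zpow_nonneg hβ0.le _)) (fun n => ?_)
      (tendsto_pow_atTop_nhds_zero_of_lt_one (inv_nonneg.2 hβ0.le) (inv_lt_one_of_one_lt₀ hβ))
    rw [zpow_neg, zpow_natCast, inv_pow]
    exact mul_le_of_le_one_left (by positivity) (hu n).2.le
  rw [hasSum_iff_tendsto_nat_of_nonneg hterm_nonneg, funext hpartial]
  simpa using tendsto_const_nhds.sub htail

end BetaTransformation

section Pisot

variable {β : ℝ} (hβ1 : 1 < β) (hβint : IsIntegral ℤ β)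
  (hpisot : ∀ z : ℂ, Polynomial.aeval z (minpoly ℚ β) = 0 → z ≠ (β : ℂ) → ‖z‖ < 1)
include hβ1 hβint hpisot

theorem exists_lt_iterate_betaMap_eq {y : ℝ} (hyK : y ∈ ℚ⟮β⟯) (hy : y ∈ Set.Ico 0 1) :
    ∃ m n, m < n ∧ (betaMap β)^[m] y = (betaMap β)^[n] y := by
  have hβ0 : 0 ≤ β := by linarith
  have : FiniteDimensional ℚ ℚ⟮β⟯ := adjoin.finiteDimensional hβint.tower_top
  have : NumberField ℚ⟮β⟯ := ⟨⟩
  obtain ⟨q, hq, hqy⟩ := ((IsFractionRing.isAlgebraic_iff ℤ ℚ ℝ).2 (isAlgebraic_iff.1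
    (Algebra.IsAlgebraic.isAlgebraic (⟨y, hyK⟩ : ℚ⟮β⟯)))).exists_integral_multiple
  set u : ℕ → ℝ := fun n => (betaMap β)^[n] y
  have hu := iterate_betaMap_mem_Ico (β := β) hy
  have huK : ∀ n, u n ∈ ℚ⟮β⟯ :=
    iterate_betaMap_mem (S := ℚ⟮β⟯.toSubfield) (mem_adjoin_simple_self ℚ β) hyK
  set z : ℕ → ℚ⟮β⟯ := fun n => ⟨q * u n, mul_mem (intCast_mem _ q) (huK n)⟩
  have hrange : (Set.range z).Finite := by
    refine NumberField.finite_range_of_pisot_recurrence (γ := AdjoinSimple.gen ℚ β)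
      ?_ _ (norm_embedding_gen_lt_one hpisot) (c := fun n => q * betaDigit β (u n))
      (M := |(q : ℝ)| * β) (C := |(q : ℝ)|) (fun n => ?_) ?_ (fun n => ?_) (fun n => ?_)
    · rwa [← isIntegral_algebraMap_iff (algebraMap ℚ⟮β⟯ ℝ).injective,
        AdjoinSimple.algebraMap_gen]
    · have hd : (0 : ℝ) ≤ betaDigit β (u n) := by exact_mod_cast betaDigit_nonneg hβ0 (hu n).1
      push_cast
      rw [abs_mul, abs_of_nonneg hd]
      exact mul_le_mul_of_nonneg_left (betaDigit_le hβ0 (hu n).2.le) (abs_nonneg _)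
    · rw [← isIntegral_algebraMap_iff (algebraMap ℚ⟮β⟯ ℝ).injective]
      simpa [z, u, zsmul_eq_mul] using hqy
    · apply Subtype.ext
      simp only [z, u, Function.iterate_succ_apply', betaMap_eq]
      push_cast
      rw [AdjoinSimple.coe_gen]
      ring
    · change ‖((q * u n : ℝ) : ℂ)‖ ≤ |(q : ℝ)|
      rw [Complex.norm_real, Real.norm_eq_abs, abs_mul, abs_of_nonneg (hu n).1]
      exact mul_le_of_le_one_right (abs_nonneg _) (hu n).2.le
  obtain ⟨m, n, hmn, hzmn⟩ := hrange.exists_lt_map_eq_of_forall_mem (Set.mem_range_self ·)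
  exact ⟨m, n, hmn, mul_left_cancel₀ (Int.cast_ne_zero.2 hq) (congrArg Subtype.val hzmn)⟩

theorem exists_hasSum_eventually_periodic_digits (hβ2 : β < 2) {y : ℝ} (hyK : y ∈ ℚ⟮β⟯) :
    ∃ (L : ℤ) (a : ℕ → ℤ), (∀ k, a k = -1 ∨ a k = 0 ∨ a k = 1) ∧
      (∃ N p : ℕ, 1 ≤ p ∧ ∀ k, N ≤ k → a (k + p) = a k) ∧
      HasSum (fun k : ℕ => (a k : ℝ) * β ^ (L - (k : ℤ))) y := by
  have hβ0 : 0 < β := by linarith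
  obtain ⟨n, hn⟩ := pow_unbounded_of_one_lt |y| hβ1
  obtain ⟨ε, hε, hyε⟩ : ∃ ε : ℤ, (ε = 1 ∨ ε = -1) ∧ y = ε * |y| := by
    rcases abs_choice y with h | h
    · exact ⟨1, .inl rfl, by simp [h]⟩
    · exact ⟨-1, .inr rfl, by simp [h]⟩
  set y₀ := |y| / β ^ n with hy₀def
  have hy₀ : y₀ ∈ Set.Ico 0 1 := ⟨by positivity, (div_lt_one (pow_pos hβ0 n)).2 hn⟩
  have hy₀K : y₀ ∈ ℚ⟮β⟯ := by
    refine div_mem ?_ (pow_mem (mem_adjoin_simple_self ℚ β) n)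
    rcases abs_choice y with h | h <;> rw [h]
    exacts [hyK, neg_mem hyK]
  obtain ⟨m, m', hmm', hrep⟩ := exists_lt_iterate_betaMap_eq hβ1 hβint hpisot hy₀K hy₀
  set d : ℕ → ℤ := fun k => betaDigit β ((betaMap β)^[k] y₀)
  refine ⟨n - 1, fun k => ε * d k, fun k => ?_, ⟨m, m' - m, by omega, fun k hk => ?_⟩, ?_⟩
  · rcases betaDigit_eq_zero_or_one hβ0.le hβ2 (iterate_betaMap_mem_Ico (β := β) hy₀ k)
      with h | h <;> rcases hε with rfl | rfl <;> simp [d, h]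
  · simp only [d, Function.iterate_add_sub_eq_of_iterate_eq hmm'.le hrep hk]
  · have hscale : (ε : ℝ) * β ^ n * y₀ = y := by
      rw [hyε, hy₀def, mul_assoc, mul_div_cancel₀ _ (pow_ne_zero n hβ0.ne')]
    have h := (hasSum_betaDigit_iterate hβ1 hy₀).mul_left ((ε : ℝ) * β ^ n)
    rw [hscale] at h
    refine h.congr_fun fun k => ?_
    rw [show (n : ℤ) - 1 - k = n + (-(k : ℤ) - 1) by ring, zpow_add₀ hβ0.ne', zpow_natCast]
    push_cast
    ring

end Pisot

/-- For a Pisot number `1 < β < 2`, the field `ℚ(β)` coincides with the set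
of complex numbers admitting an eventually periodic
`(β, {-1,0,1})`-representation. -/
theorem stmt_12
    (β : ℝ) (hβ1 : 1 < β) (hβ2 : β < 2) (hβint : IsIntegral ℤ β)
    (hpisot : ∀ z : ℂ, Polynomial.aeval z (minpoly ℚ β) = 0 → z ≠ (β : ℂ) → ‖z‖ < 1) :
    ∀ x : ℂ,
      x ∈ Subfield.closure ({(β : ℂ)} : Set ℂ) ↔
      ∃ (L : ℤ) (a : ℕ → ℤ),
        (∀ k, a k = -1 ∨ a k = 0 ∨ a k = 1) ∧
        (∃ N p : ℕ, 1 ≤ p ∧ ∀ k, N ≤ k → a (k + p) = a k) ∧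
        x = ∑' k : ℕ, (a k : ℂ) * (β : ℂ) ^ (L - (k : ℤ)) := by
  intro x
  constructor
  · intro hx
    obtain ⟨y, hyK, rfl⟩ := exists_eq_ofReal_of_mem_closure hx
    obtain ⟨L, a, ha, hper, hsum⟩ :=
      exists_hasSum_eventually_periodic_digits hβ1 hβint hpisot hβ2 hyK
    refine ⟨L, a, ha, hper, ?_⟩
    rw [← hsum.tsum_eq, Complex.ofReal_tsum]
    push_cast
    rfl
  · rintro ⟨L, a, -, ⟨N, p, hp, hper⟩, rfl⟩
    have hβF : (β : ℂ) ∈ Subfield.closure {(β : ℂ)} := Subfield.subset_closure rfl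
    have hξ : (β : ℂ) ^ (-(p : ℤ)) ≠ 1 := by
      rw [← Complex.ofReal_zpow, ← Complex.ofReal_one, Ne, Complex.ofReal_inj]
      exact (zpow_lt_one_of_neg₀ hβ1 (by omega)).ne
    refine tsum_mem_of_eventually_mul _ (N := N) (p := p)
      (fun k => mul_mem (intCast_mem _ _) (zpow_mem hβF _)) (zpow_mem hβF _) hξ fun k hk => ?_
    rw [hper k hk, mul_left_comm, ← zpow_add₀ (by exact_mod_cast (by linarith : β ≠ 0))]
    congr 2
    push_cast
    ring
end

section
/- Let n ≥ 3 and let f(x) = −1 + x + x^n + x^{m_1} + ⋯ + x^{m_s} belong to the class B_n (s ≥ 1, m_1 − n ≥ n − 1, m_{q+1} − m_q ≥ n − 1 for 1 ≤ q < s). Let γ > 1 be the real number such that γ^{−1} is the unique zero of f in (0,1). Then γ is a nonreciprocal real algebraic integer: its minimal polynomial P_γ over ℚ satisfies X^{deg P_γ} P_γ(1/X) ≠ ±P_γ(X); moreover P_γ has no root of modulus 1. -/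
/-!
Clearing denominators in `f(γ⁻¹) = 0` gives a polynomial equation for `γ` whose leading
coefficient is the constant term `-1` of `f`, so `γ` is an algebraic integer.
If the minimal polynomial `P` of `γ` were reciprocal up to sign, `γ⁻¹` would be a conjugate
of `γ`, and then `γ` would also be a root of `f`; but `f > 0` on `(1, ∞)`.
A root `z` of `P` on the unit circle would make `z⁻¹ = z̄` a common root of the irreducible
`P` and of its reverse, forcing `P` to be reciprocal up to sign.
-/

open Polynomial

lemma aeval_inv_reverse_eq_zero_iff {R L : Type*} [CommSemiring R] [Semifield L] [Algebra R L]
    {x : L} (hx : x ≠ 0) (p : R[X]) : aeval x⁻¹ p.reverse = 0 ↔ aeval x p = 0 := by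
  let := invertibleOfNonzero hx
  rw [aeval_def, aeval_def, ← invOf_eq_inv, eval₂_reverse_eq_zero_iff]

lemma isIntegral_inv_of_aeval_eq_zero {R L : Type*} [CommRing R] [Field L] [Algebra R L]
    {p : R[X]} (hp : IsUnit (p.coeff 0)) {x : L} (hx : x ≠ 0) (h : aeval x p = 0) :
    IsIntegral R x⁻¹ := by
  have := (algebraMap R L).domain_nontrivial
  refine ⟨C ↑hp.unit⁻¹ * p.reverse, monic_C_mul_of_mul_leadingCoeff_eq_one ?_, ?_⟩
  · rw [reverse_leadingCoeff, trailingCoeff_eq_coeff_zero hp.ne_zero, hp.val_inv_mul]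
  · rw [← aeval_def, map_mul, (aeval_inv_reverse_eq_zero_iff hx p).2 h, mul_zero]

lemma reverse_eq_or_eq_neg_of_dvd_reverse {R : Type*} [CommRing R] [IsDomain R] {P : R[X]}
    (hP : P.Monic) (h : P ∣ P.reverse) : P.reverse = P ∨ P.reverse = -P := by
  obtain ⟨u, hu⟩ := h
  have hu0 : u ≠ 0 := by
    rintro rfl
    exact hP.ne_zero (reverse_eq_zero.mp (by simpa using hu))
  have hdeg : u.natDegree = 0 := by
    have := reverse_natDegree_le P
    rw [hu, natDegree_mul hP.ne_zero hu0] at this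
    omega
  obtain ⟨c, rfl⟩ := natDegree_eq_zero.mp hdeg
  have hconst : 1 = P.coeff 0 * c := by
    rw [← hP.leadingCoeff, ← coeff_zero_reverse, hu, coeff_mul_C]
  have htop : P.coeff 0 = c := by
    have := congrArg (coeff · P.natDegree) hu
    simpa [coeff_reverse, hP.coeff_natDegree] using this
  rcases mul_self_eq_one_iff.mp (htop ▸ hconst).symm with rfl | rfl
  · left; simp [hu]
  · right; simp [hu]

lemma reverse_eq_or_eq_neg_of_aeval_eq_zero_of_norm_eq_one {P : ℚ[X]} (hirr : Irreducible P)
    (hmonic : P.Monic) {z : ℂ} (hz : aeval z P = 0) (hz1 : ‖z‖ = 1) :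
    P.reverse = P ∨ P.reverse = -P := by
  have hz0 : z ≠ 0 := norm_ne_zero_iff.mp (by rw [hz1]; exact one_ne_zero)
  have hinv : aeval z⁻¹ P = 0 := by
    rw [Complex.inv_eq_conj hz1]
    simpa [hz] using (aeval_algHom_apply (Complex.conjAe.toAlgHom.restrictScalars ℚ) z P)
  refine reverse_eq_or_eq_neg_of_dvd_reverse hmonic ?_
  have hdvd := minpoly.dvd ℚ z⁻¹ ((aeval_inv_reverse_eq_zero_iff hz0 P).2 hz)
  rwa [← minpoly.eq_of_irreducible_of_monic hirr hinv hmonic] at hdvd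

lemma aeval_eq_zero_of_aeval_minpoly_eq_zero {K L : Type*} [Field K] [Field L]
    [Algebra K L] {x y : L} (hx : IsIntegral K x) (hy : aeval y (minpoly K x) = 0) {p : K[X]}
    (hp : aeval y p = 0) : aeval x p = 0 := by
  obtain ⟨q, rfl⟩ : minpoly K x ∣ p := by
    rw [minpoly.eq_of_irreducible_of_monic (minpoly.irreducible hx) hy (minpoly.monic hx)]
    exact minpoly.dvd K y hp
  rw [map_mul, minpoly.aeval, zero_mul]

lemma monotoneOn_Icc_of_add_le_succ {m : ℕ → ℕ} {s k : ℕ}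
    (h : ∀ q, 1 ≤ q → q < s → m q + k ≤ m (q + 1)) : MonotoneOn m (Set.Icc 1 s) :=
  monotoneOn_of_le_add_one Set.ordConnected_Icc fun q _ hq hq1 =>
    le_of_add_le_left (h q hq.1 (by simpa using hq1.2))

section AlmostNewman

variable (R : Type*) [CommRing R] (n s : ℕ) (m : ℕ → ℕ)

noncomputable def almostNewmanPoly : R[X] := -1 + X + X ^ n + ∑ q ∈ Finset.Icc 1 s, X ^ m q

variable {R n s m}

@[simp]
lemma aeval_almostNewmanPoly {A : Type*} [CommRing A] [Algebra R A] (x : A) :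
    aeval x (almostNewmanPoly R n s m) = -1 + x + x ^ n + ∑ q ∈ Finset.Icc 1 s, x ^ m q := by
  simp [almostNewmanPoly]

lemma coeff_zero_almostNewmanPoly (hn : n ≠ 0) (hm : ∀ q ∈ Finset.Icc 1 s, m q ≠ 0) :
    (almostNewmanPoly R n s m).coeff 0 = -1 := by
  rw [almostNewmanPoly, coeff_add, coeff_add, coeff_add, finsetSum_coeff,
    Finset.sum_eq_zero fun q hq => by rw [coeff_X_pow, if_neg (hm q hq).symm]]
  simp [coeff_X_pow, hn.symm]

lemma aeval_almostNewmanPoly_pos [Algebra R ℝ] {x : ℝ} (hx : 1 < x) :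
    0 < aeval x (almostNewmanPoly R n s m) := by
  rw [aeval_almostNewmanPoly]
  have hx0 : 0 < x := by linarith
  have := Finset.sum_nonneg fun q (_ : q ∈ Finset.Icc 1 s) => pow_nonneg hx0.le (m q)
  linarith [pow_pos hx0 n]

end AlmostNewman

theorem stmt_16_general
    (n : ℕ) (hn : 3 ≤ n) (s : ℕ)
    (m : ℕ → ℕ) (hm1 : n + (n - 1) ≤ m 1)
    (hmq : ∀ q, 1 ≤ q → q < s → m q + (n - 1) ≤ m (q + 1))
    (f : ℝ → ℝ)
    (hf : ∀ x, f x = -1 + x + x ^ n + ∑ q ∈ Finset.Icc 1 s, x ^ m q)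
    (γ : ℝ) (hγ : 1 < γ) (hγroot : f γ⁻¹ = 0) :
    IsIntegral ℤ γ ∧
    (minpoly ℚ γ).reverse ≠ minpoly ℚ γ ∧
    (minpoly ℚ γ).reverse ≠ -(minpoly ℚ γ) ∧
    ∀ z : ℂ, Polynomial.aeval z (minpoly ℚ γ) = 0 → ‖z‖ ≠ 1 := by
  have hγ0 : γ ≠ 0 := by positivity
  have hm : ∀ q ∈ Finset.Icc 1 s, m q ≠ 0 := fun q hq => by
    have hq := Finset.mem_Icc.mp hq
    have := monotoneOn_Icc_of_add_le_succ hmq ⟨le_rfl, hq.1.trans hq.2⟩ hq hq.1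
    omega
  have hroot (R : Type) [CommRing R] [Algebra R ℝ] :
      aeval γ⁻¹ (almostNewmanPoly R n s m) = 0 := by
    rw [aeval_almostNewmanPoly, ← hf, hγroot]
  have hunit : IsUnit ((almostNewmanPoly ℤ n s m).coeff 0) := by
    rw [coeff_zero_almostNewmanPoly (by omega) hm]
    exact isUnit_one.neg
  have hint : IsIntegral ℤ γ := by
    simpa using isIntegral_inv_of_aeval_eq_zero hunit (inv_ne_zero hγ0) (hroot ℤ)
  have hintℚ : IsIntegral ℚ γ := hint.tower_top
  set P := minpoly ℚ γ
  have hPinv : aeval γ⁻¹ P ≠ 0 := fun h => (aeval_almostNewmanPoly_pos hγ).ne'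
    (aeval_eq_zero_of_aeval_minpoly_eq_zero hintℚ h (hroot ℚ))
  have hrev : aeval γ⁻¹ P.reverse = 0 :=
    (aeval_inv_reverse_eq_zero_iff hγ0 P).2 (minpoly.aeval ℚ γ)
  have hnonrec : ¬(P.reverse = P ∨ P.reverse = -P) := by
    rintro (h | h) <;> rw [h] at hrev
    · exact hPinv hrev
    · exact hPinv (by simpa using hrev)
  refine ⟨hint, fun h => hnonrec (.inl h), fun h => hnonrec (.inr h), fun z hz hz1 => ?_⟩
  exact hnonrec <| reverse_eq_or_eq_neg_of_aeval_eq_zero_of_norm_eq_one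
    (minpoly.irreducible hintℚ) (minpoly.monic hintℚ) hz hz1

/-- For `f` in the class `B_n` with unique zero `γ⁻¹` in `(0,1)`, the number
`γ` is a nonreciprocal real algebraic integer whose minimal polynomial has
no root of modulus `1`. -/
theorem stmt_16
    (n : ℕ) (hn : 3 ≤ n) (s : ℕ) (hs : 1 ≤ s)
    (m : ℕ → ℕ) (hm1 : n + (n - 1) ≤ m 1)
    (hmq : ∀ q, 1 ≤ q → q < s → m q + (n - 1) ≤ m (q + 1))
    (f : ℝ → ℝ)
    (hf : ∀ x, f x = -1 + x + x ^ n + ∑ q ∈ Finset.Icc 1 s, x ^ m q)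
    (γ : ℝ) (hγ : 1 < γ) (hγroot : f γ⁻¹ = 0)
    (hγuniq : ∀ y ∈ Set.Ioo (0 : ℝ) 1, f y = 0 → y = γ⁻¹) :
    IsIntegral ℤ γ ∧
    (minpoly ℚ γ).reverse ≠ minpoly ℚ γ ∧
    (minpoly ℚ γ).reverse ≠ -(minpoly ℚ γ) ∧
    ∀ z : ℂ, Polynomial.aeval z (minpoly ℚ γ) = 0 → ‖z‖ ≠ 1 :=
  stmt_16_general n hn s m hm1 hmq f hf γ hγ hγroot
end
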